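/- arXiv:math/0401238 — 5 statements merged into one kernel-verified Lean document; each statement's English description precedes it below -/
import Mathlib

section
/- For all real y, 10.91692658 + 18.63362·cos(y) + 11.4517·cos(2y) + 4.7·cos(3y) + cos(4y) = 8(0.91 + cos y)²(0.265 + cos y)² ≥ 0. -/
theorem Real.cos_four_mul (x : ℝ) : Real.cos (4 * x) = 8 * Real.cos x ^ 4 - 8 * Real.cos x ^ 2 + 1 := by
  rw [show (4 : ℝ) * x = 2 * (2 * x) by ring, Real.cos_two_mul, Real.cos_two_mul]
  ring

theorem stmt_0 (y : ℝ) :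
    10.91692658 + 18.63362 * Real.cos y + 11.4517 * Real.cos (2 * y)
      + 4.7 * Real.cos (3 * y) + Real.cos (4 * y)
      = 8 * (0.91 + Real.cos y) ^ 2 * (0.265 + Real.cos y) ^ 2 ∧
    0 ≤ 8 * (0.91 + Real.cos y) ^ 2 * (0.265 + Real.cos y) ^ 2 := by
  refine ⟨?_, by positivity⟩
  rw [Real.cos_four_mul, Real.cos_three_mul, Real.cos_two_mul]
  ring
end

section
/- Let β ∈ [1/2, 1], y > 0, σ > 1 and τ = (1 + √(1 + 4σ²))/2. Then Re(1/(σ−β+iy) − (1/√5)·1/(τ−β+iy)) + Re(1/(σ−1+β+iy) − (1/√5)·1/(τ−1+β+iy)) ≥ 0. -/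
/-!
Since `Re (1 / (a + iy)) = a / (a² + y²)`, the two terms at the shifts `x - β` and `x - 1 + β`
combine into `(2x - 1) · A / (A² + K)` with `A = x² - x + β(1 - β) + y²` and `K = y²(1 - 2β)²`.
The choice of `τ` makes `τ² - τ = σ²`, so passing from `x = σ` to `x = τ` replaces `A` by `A + σ`.
Because `A(A + σ) ≥ K`, the map `t ↦ t / (t² + K)` decreases from `A` to `A + σ`, and the factor
`1/√5` absorbs the growth of `2x - 1`: `√(1 + 4σ²) ≤ √5 (2σ - 1)` for `σ ≥ 1`.
-/

open Complex

lemma Complex.inv_ofReal_add_ofReal_mul_I_re (a y : ℝ) :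
    ((a : ℂ) + y * I)⁻¹.re = a / (a ^ 2 + y ^ 2) := by
  simp [inv_re, normSq_apply, sq]

lemma div_sq_add_add_div_sq_add (a b K : ℝ) (hK : 0 < K) :
    a / (a ^ 2 + K) + b / (b ^ 2 + K)
      = (a + b) * (a * b + K) / ((a * b + K) ^ 2 + K * (a - b) ^ 2) := by
  have ha : a ^ 2 + K ≠ 0 := (add_pos_of_nonneg_of_pos (sq_nonneg a) hK).ne'
  have hb : b ^ 2 + K ≠ 0 := (add_pos_of_nonneg_of_pos (sq_nonneg b) hK).ne'
  rw [div_add_div _ _ ha hb]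
  congr 1 <;> ring

lemma div_sq_add_antitone {A B K : ℝ} (hA : 0 < A) (hAB : A ≤ B) (hK : 0 ≤ K)
    (hKAB : K ≤ A * B) : B / (B ^ 2 + K) ≤ A / (A ^ 2 + K) := by
  rw [div_le_div_iff₀ (add_pos_of_pos_of_nonneg (pow_pos (hA.trans_le hAB) 2) hK)
    (add_pos_of_pos_of_nonneg (pow_pos hA 2) hK)]
  nlinarith [mul_nonneg (sub_nonneg.2 hAB) (sub_nonneg.2 hKAB)]

lemma sub_div_add_sub_one_add_div (x β y : ℝ) (hy : 0 < y) :
    (x - β) / ((x - β) ^ 2 + y ^ 2) + (x - 1 + β) / ((x - 1 + β) ^ 2 + y ^ 2)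
      = (2 * x - 1) * (x ^ 2 - x + β * (1 - β) + y ^ 2)
        / ((x ^ 2 - x + β * (1 - β) + y ^ 2) ^ 2 + y ^ 2 * (1 - 2 * β) ^ 2) := by
  rw [div_sq_add_add_div_sq_add _ _ _ (pow_pos hy 2)]
  congr 1 <;> ring

lemma sqrt_one_add_four_mul_sq_le {σ : ℝ} (hσ : 1 ≤ σ) :
    √(1 + 4 * σ ^ 2) ≤ √5 * (2 * σ - 1) := by
  rw [Real.sqrt_le_left (mul_nonneg (Real.sqrt_nonneg _) (by linarith)), mul_pow,
    Real.sq_sqrt (by norm_num)]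
  nlinarith

theorem stmt_5 (β σ y τ : ℝ) (hβ : β ∈ Set.Icc (1/2 : ℝ) 1) (hy : 0 < y) (hσ : 1 < σ)
    (hτ : τ = (1 + Real.sqrt (1 + 4 * σ ^ 2)) / 2) :
    0 ≤ ((((σ - β : ℝ) : ℂ) + y * Complex.I)⁻¹
          - (1 / Real.sqrt 5 : ℝ) * (((τ - β : ℝ) : ℂ) + y * Complex.I)⁻¹).re
        + ((((σ - 1 + β : ℝ) : ℂ) + y * Complex.I)⁻¹
          - (1 / Real.sqrt 5 : ℝ) * (((τ - 1 + β : ℝ) : ℂ) + y * Complex.I)⁻¹).re := by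
  obtain ⟨hβ1, hβ2⟩ := hβ
  have h2τ : 2 * τ - 1 = √(1 + 4 * σ ^ 2) := by rw [hτ]; ring
  have hτsq : τ ^ 2 - τ = σ ^ 2 := by
    have := Real.sq_sqrt (by positivity : (0 : ℝ) ≤ 1 + 4 * σ ^ 2)
    rw [hτ]; linear_combination this / 4
  have hc : 1 / √5 * (2 * τ - 1) ≤ 2 * σ - 1 := by
    rw [h2τ, one_div_mul_eq_div, div_le_iff₀' (by positivity)]
    exact sqrt_one_add_four_mul_sq_le hσ.le
  simp only [sub_re, re_ofReal_mul, inv_ofReal_add_ofReal_mul_I_re]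
  rw [sub_add_sub_comm, ← mul_add, sub_div_add_sub_one_add_div _ _ _ hy,
    sub_div_add_sub_one_add_div _ _ _ hy,
    show τ ^ 2 - τ + β * (1 - β) + y ^ 2 = (σ ^ 2 - σ + β * (1 - β) + y ^ 2) + σ by
      linarith]
  set A := σ ^ 2 - σ + β * (1 - β) + y ^ 2
  set K := y ^ 2 * (1 - 2 * β) ^ 2
  have hyA : y ^ 2 ≤ A := by nlinarith
  have hA : 0 < A := (pow_pos hy 2).trans_le hyA
  have hKA : K ≤ A * (A + σ) := by
    have hK : K ≤ y ^ 2 := mul_le_of_le_one_right (sq_nonneg y) (by nlinarith)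
    nlinarith
  have hdecr : (A + σ) / ((A + σ) ^ 2 + K) ≤ A / (A ^ 2 + K) :=
    div_sq_add_antitone hA (by linarith) (by positivity) hKA
  have hpos : 0 ≤ (A + σ) / ((A + σ) ^ 2 + K) := by
    have : 0 < A + σ := by linarith
    positivity
  rw [sub_nonneg]
  calc 1 / √5 * ((2 * τ - 1) * (A + σ) / ((A + σ) ^ 2 + K))
      = 1 / √5 * (2 * τ - 1) * ((A + σ) / ((A + σ) ^ 2 + K)) := by ring
    _ ≤ (2 * σ - 1) * ((A + σ) / ((A + σ) ^ 2 + K)) := mul_le_mul_of_nonneg_right hc hpos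
    _ ≤ (2 * σ - 1) * (A / (A ^ 2 + K)) := mul_le_mul_of_nonneg_left hdecr (by linarith)
    _ = (2 * σ - 1) * A / (A ^ 2 + K) := by ring
end

section
/- For θ ∈ (π/2, π), the integral ∫₀^{−2θ/tanθ} h_θ(u) du equals 2(1+tan²θ)(1 − θ cotθ)². -/
/-!
Put `t = tan θ` and `L = -2θ/t`, so that `L t = -2θ`. Regrouped, `h_θ(u)` is `(1 + t²)` times
a linear combination of `(L - u) cos(u t)`, `L - u + 2`, `sin(2θ + u t)` and `sin(θ + u t)`, and
over `[0, L]` these integrate to `(1 - cos 2θ)/t²`, `L²/2 + 2L`, `(cos 2θ - 1)/t` and `0`.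
With `t = sin θ / cos θ` the first and third terms each contribute `1`, leaving
`(1 + t²)(2 + 2L + L²/2) = (1 + t²)(L + 2)²/2`.
-/

open Real intervalIntegral

theorem integral_sin_add_mul {t : ℝ} (ht : t ≠ 0) (a L : ℝ) :
    ∫ u in (0:ℝ)..L, sin (a + u * t) = (cos a - cos (a + L * t)) / t := by
  simp_rw [mul_comm _ t]
  rw [integral_comp_add_mul _ ht, integral_sin, mul_zero, add_zero, smul_eq_mul, inv_mul_eq_div]

theorem integral_sub_mul_cos_mul {t : ℝ} (ht : t ≠ 0) (L : ℝ) :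
    ∫ u in (0:ℝ)..L, (L - u) * cos (u * t) = (1 - cos (L * t)) / t ^ 2 := by
  have hderiv (u : ℝ) : HasDerivAt (fun u ↦ (L - u) * sin (u * t) / t - cos (u * t) / t ^ 2)
      ((L - u) * cos (u * t)) u := by
    have hmul : HasDerivAt (· * t) t u := by simpa using (hasDerivAt_id u).mul_const t
    refine ((((hasDerivAt_id' u).const_sub L).mul hmul.sin).div_const t).sub
      (hmul.cos.div_const (t ^ 2)) |>.congr_deriv ?_
    field_simp
    ring
  rw [integral_eq_sub_of_hasDerivAt (fun u _ ↦ hderiv u)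
    ((by fun_prop : Continuous _).intervalIntegrable _ _)]
  simp only [sub_self, zero_mul, sin_zero, mul_zero, zero_div, cos_zero, zero_sub]
  ring

theorem integral_sub_add_const (L c : ℝ) :
    ∫ u in (0:ℝ)..L, (L - u + c) = L ^ 2 / 2 + c * L := by
  rw [integral_add, integral_sub, integral_id, integral_const, integral_const]
  · simp only [sub_zero, smul_eq_mul]
    ring
  all_goals apply Continuous.intervalIntegrable; fun_prop

noncomputable def heathBrown (θ u : ℝ) : ℝ :=
  (1 + tan θ ^ 2) *
    ((1 + tan θ ^ 2) * (-θ / tan θ - u / 2) * cos (u * tan θ)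
      + (-2 * θ / tan θ) - u
      - sin (2 * θ + u * tan θ) / sin (2 * θ)
      + 2 * (1 + sin (θ + u * tan θ) / sin θ))

theorem heathBrown_eq (θ u : ℝ) :
    heathBrown θ u = (1 + tan θ ^ 2) *
      ((1 + tan θ ^ 2) / 2 * ((-2 * θ / tan θ - u) * cos (u * tan θ))
        + (-2 * θ / tan θ - u + 2)
        - sin (2 * θ + u * tan θ) / sin (2 * θ)
        + 2 / sin θ * sin (θ + u * tan θ)) := by
  unfold heathBrown
  ring

theorem integral_heathBrown_eq (θ L : ℝ) :
    ∫ u in (0:ℝ)..L, heathBrown θ u = (1 + tan θ ^ 2) *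
      ((1 + tan θ ^ 2) / 2 * (∫ u in (0:ℝ)..L, (-2 * θ / tan θ - u) * cos (u * tan θ))
        + (∫ u in (0:ℝ)..L, (-2 * θ / tan θ - u + 2))
        - (∫ u in (0:ℝ)..L, sin (2 * θ + u * tan θ)) / sin (2 * θ)
        + 2 / sin θ * ∫ u in (0:ℝ)..L, sin (θ + u * tan θ)) := by
  simp_rw [heathBrown_eq]
  rw [integral_const_mul, integral_add, integral_sub, integral_add, integral_const_mul,
    integral_div, integral_const_mul]
  all_goals apply Continuous.intervalIntegrable; fun_prop

theorem integral_heathBrown {θ : ℝ} (hθ : sin (2 * θ) ≠ 0) :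
    ∫ u in (0:ℝ)..(-2 * θ / tan θ), heathBrown θ u
      = 2 * (1 + tan θ ^ 2) * (1 - θ * (cos θ / sin θ)) ^ 2 := by
  have hsin : sin θ ≠ 0 := fun h ↦ hθ (by rw [sin_two_mul, h, mul_zero, zero_mul])
  have hcos : cos θ ≠ 0 := fun h ↦ hθ (by rw [sin_two_mul, h, mul_zero])
  have htan : tan θ ≠ 0 := by rw [tan_eq_sin_div_cos]; exact div_ne_zero hsin hcos
  have hLt : -2 * θ / tan θ * tan θ = -(2 * θ) := by field_simp
  have hcos_part : (1 + tan θ ^ 2) / 2 * ((1 - cos (2 * θ)) / tan θ ^ 2) = 1 := by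
    rw [cos_two_mul, tan_eq_sin_div_cos]
    field_simp
    linear_combination (-2 * cos θ ^ 2) * sin_sq_add_cos_sq θ
  have hsin_part : (cos (2 * θ) - 1) / tan θ / sin (2 * θ) = -1 := by
    rw [cos_two_mul, sin_two_mul, tan_eq_sin_div_cos]
    field_simp
    linear_combination 2 * sin_sq_add_cos_sq θ
  have hcot : -2 * θ / tan θ = -2 * θ * (cos θ / sin θ) := by
    rw [tan_eq_sin_div_cos, div_div_eq_mul_div, mul_div_assoc]
  rw [integral_heathBrown_eq, integral_sub_mul_cos_mul htan, integral_sub_add_const,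
    integral_sin_add_mul htan, integral_sin_add_mul htan, hLt]
  simp only [cos_neg, cos_zero, add_neg_cancel, show θ + -(2 * θ) = -θ by ring, sub_self,
    zero_div, mul_zero, add_zero]
  rw [hcos_part, hsin_part, hcot]
  ring

open Real in
theorem stmt_10 (θ : ℝ) (hθ : θ ∈ Set.Ioo (π / 2) π) :
    (∫ u in (0:ℝ)..(-2 * θ / Real.tan θ),
      (1 + Real.tan θ ^ 2) *
        ((1 + Real.tan θ ^ 2) * (-θ / Real.tan θ - u / 2) * Real.cos (u * Real.tan θ)
          + (-2 * θ / Real.tan θ) - u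
          - Real.sin (2 * θ + u * Real.tan θ) / Real.sin (2 * θ)
          + 2 * (1 + Real.sin (θ + u * Real.tan θ) / Real.sin θ)))
      = 2 * (1 + Real.tan θ ^ 2) * (1 - θ * (Real.cos θ / Real.sin θ)) ^ 2 := by
  obtain ⟨hθ_gt, hθ_lt⟩ := hθ
  have hsin : 0 < sin θ := sin_pos_of_pos_of_lt_pi (by linarith [pi_pos]) hθ_lt
  have hcos : cos θ < 0 := cos_neg_of_pi_div_two_lt_of_lt hθ_gt (by linarith [pi_pos])
  have hsin_two_mul : sin (2 * θ) < 0 := by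
    rw [sin_two_mul]
    exact mul_neg_of_pos_of_neg (by positivity) hcos
  exact integral_heathBrown hsin_two_mul.ne
end

section
/- For θ ∈ (π/2, π), the integral ∫₀^{−2θ/tanθ} e^{−u} h_θ(u) du equals 2tan²θ + 3 − 3θ tanθ − 3θ cotθ. -/
/-!
Every term of `h_θ(u)` is a constant, `u`, `cos (u tan θ)`, `u cos (u tan θ)` or
`sin (c + u tan θ)`, and against `e^{-u}` each has an elementary primitive whose denominator
`1 + tan² θ` (or its square) is cancelled by the prefactors of `h_θ`. At the right end
`L = -2θ / tan θ` of the support, `L tan θ = -2θ` and the primitive vanishes, so the integral is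
minus its value at `0`.
-/

open Real

section LaplacePrimitives

variable (b u : ℝ)

theorem hasDerivAt_primitive_exp_neg_mul_sin (c : ℝ) :
    HasDerivAt (fun x => -exp (-x) * (sin (c + x * b) + b * cos (c + x * b)))
      ((1 + b ^ 2) * (exp (-u) * sin (c + u * b))) u := by
  have hlin : HasDerivAt (fun x => c + x * b) b u := (hasDerivAt_mul_const b).const_add c
  refine ((hasDerivAt_neg u).exp.fun_neg.fun_mul
    (hlin.sin.fun_add (hlin.cos.const_mul b))).congr_deriv ?_
  ring

theorem hasDerivAt_primitive_exp_neg_mul_cos :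
    HasDerivAt (fun x => exp (-x) * (b * sin (x * b) - cos (x * b)))
      ((1 + b ^ 2) * (exp (-u) * cos (u * b))) u := by
  have hlin : HasDerivAt (fun x => x * b) b u := hasDerivAt_mul_const b
  refine ((hasDerivAt_neg u).exp.fun_mul ((hlin.sin.const_mul b).fun_sub hlin.cos)).congr_deriv ?_
  ring

theorem hasDerivAt_primitive_exp_neg_mul_id_mul_cos :
    HasDerivAt (fun x => exp (-x) *
        ((1 + b ^ 2) * x * (b * sin (x * b) - cos (x * b)) + 2 * b * sin (x * b)
          + (b ^ 2 - 1) * cos (x * b)))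
      ((1 + b ^ 2) ^ 2 * (exp (-u) * (u * cos (u * b)))) u := by
  have hlin : HasDerivAt (fun x => x * b) b u := hasDerivAt_mul_const b
  refine ((hasDerivAt_neg u).exp.fun_mul
    (((((hasDerivAt_id' u).const_mul (1 + b ^ 2)).fun_mul
      ((hlin.sin.const_mul b).fun_sub hlin.cos)).fun_add (hlin.sin.const_mul (2 * b))).fun_add
        (hlin.cos.const_mul (b ^ 2 - 1)))).congr_deriv ?_
  ring

theorem hasDerivAt_primitive_exp_neg_mul_sub (β : ℝ) :
    HasDerivAt (fun x => -exp (-x) * (β - 1 - x)) (exp (-u) * (β - u)) u := by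
  refine ((hasDerivAt_neg u).exp.fun_neg.fun_mul
    ((hasDerivAt_id' u).const_sub (β - 1))).congr_deriv ?_
  ring

end LaplacePrimitives

theorem sin_two_mul_eq_two_mul_tan_div_one_add_tan_sq (x : ℝ) :
    sin (2 * x) = 2 * tan x / (1 + tan x ^ 2) := by
  simpa using sin_eq_two_mul_tan_half_div_one_add_tan_half_sq (2 * x)

theorem cos_two_mul_eq_one_sub_tan_sq_div_one_add_tan_sq {x : ℝ} (hx : cos x ≠ 0) :
    cos (2 * x) = (1 - tan x ^ 2) / (1 + tan x ^ 2) := by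
  rw [cos_two_mul, ← inv_one_add_tan_sq hx]
  field_simp
  ring

noncomputable def heathBrownSmoothing (θ u : ℝ) : ℝ :=
  (1 + tan θ ^ 2) *
    ((1 + tan θ ^ 2) * (-θ / tan θ - u / 2) * cos (u * tan θ)
      + (-2 * θ / tan θ) - u
      - sin (2 * θ + u * tan θ) / sin (2 * θ)
      + 2 * (1 + sin (θ + u * tan θ) / sin θ))

/-- The primitives `hasDerivAt_primitive_exp_neg_mul_*` at `b = tan θ`, weighted by the
coefficients of the matching terms of `e^{-u} h_θ(u)`. -/
noncomputable def heathBrownPrimitive (θ u : ℝ) : ℝ :=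
  (1 + tan θ ^ 2) * (-θ / tan θ) * (exp (-u) * (tan θ * sin (u * tan θ) - cos (u * tan θ)))
    - exp (-u) * ((1 + tan θ ^ 2) * u * (tan θ * sin (u * tan θ) - cos (u * tan θ))
        + 2 * tan θ * sin (u * tan θ) + (tan θ ^ 2 - 1) * cos (u * tan θ)) / 2
    + (1 + tan θ ^ 2) * (-exp (-u) * (-2 * θ / tan θ + 2 - 1 - u))
    - -exp (-u) * (sin (2 * θ + u * tan θ) + tan θ * cos (2 * θ + u * tan θ)) / sin (2 * θ)
    + 2 * (-exp (-u) * (sin (θ + u * tan θ) + tan θ * cos (θ + u * tan θ))) / sin θ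

theorem hasDerivAt_heathBrownPrimitive (θ u : ℝ) :
    HasDerivAt (heathBrownPrimitive θ) (exp (-u) * heathBrownSmoothing θ u) u := by
  refine (((((hasDerivAt_primitive_exp_neg_mul_cos (tan θ) u).const_mul
      ((1 + tan θ ^ 2) * (-θ / tan θ))).fun_sub
    ((hasDerivAt_primitive_exp_neg_mul_id_mul_cos (tan θ) u).div_const 2)).fun_add
    ((hasDerivAt_primitive_exp_neg_mul_sub u (-2 * θ / tan θ + 2)).const_mul (1 + tan θ ^ 2))).fun_sub
    ((hasDerivAt_primitive_exp_neg_mul_sin (tan θ) u (2 * θ)).div_const (sin (2 * θ)))).fun_add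
    (((hasDerivAt_primitive_exp_neg_mul_sin (tan θ) u θ).const_mul 2).div_const (sin θ))
    |>.congr_deriv ?_
  rw [heathBrownSmoothing]
  ring

theorem heathBrownPrimitive_neg_two_mul_div_tan {θ : ℝ} (hθ : tan θ ≠ 0) :
    heathBrownPrimitive θ (-2 * θ / tan θ) = 0 := by
  have hc : cos θ ≠ 0 := fun h => hθ (tan_eq_zero_of_cos_eq_zero h)
  have hLt : -2 * θ / tan θ * tan θ = -(2 * θ) := by field_simp
  simp only [heathBrownPrimitive, hLt, add_neg_cancel, sin_zero, cos_zero, sin_neg, cos_neg,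
    show θ + -(2 * θ) = -θ by ring, ← tan_mul_cos hc,
    sin_two_mul_eq_two_mul_tan_div_one_add_tan_sq,
    cos_two_mul_eq_one_sub_tan_sq_div_one_add_tan_sq hc]
  field_simp
  ring

theorem heathBrownPrimitive_zero {θ : ℝ} (hθ : tan θ ≠ 0) :
    heathBrownPrimitive θ 0 = -(2 * tan θ ^ 2 + 3 - 3 * θ * tan θ - 3 * θ * (cos θ / sin θ)) := by
  have hc : cos θ ≠ 0 := fun h => hθ (tan_eq_zero_of_cos_eq_zero h)
  simp only [heathBrownPrimitive, zero_mul, sub_zero, neg_zero, exp_zero, sin_zero, cos_zero,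
    add_zero, ← tan_mul_cos hc, sin_two_mul_eq_two_mul_tan_div_one_add_tan_sq,
    cos_two_mul_eq_one_sub_tan_sq_div_one_add_tan_sq hc]
  field_simp
  ring

theorem integral_exp_neg_mul_heathBrownSmoothing {θ : ℝ} (hθ : tan θ ≠ 0) :
    ∫ u in (0 : ℝ)..(-2 * θ / tan θ), exp (-u) * heathBrownSmoothing θ u
      = 2 * tan θ ^ 2 + 3 - 3 * θ * tan θ - 3 * θ * (cos θ / sin θ) := by
  have hcont : Continuous fun u => exp (-u) * heathBrownSmoothing θ u := by
    unfold heathBrownSmoothing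
    fun_prop
  rw [intervalIntegral.integral_eq_sub_of_hasDerivAt
      (fun u _ => hasDerivAt_heathBrownPrimitive θ u) (hcont.intervalIntegrable _ _),
    heathBrownPrimitive_neg_two_mul_div_tan hθ, heathBrownPrimitive_zero hθ, zero_sub, neg_neg]

open Real in
theorem stmt_11 (θ : ℝ) (hθ : θ ∈ Set.Ioo (π / 2) π) :
    (∫ u in (0:ℝ)..(-2 * θ / Real.tan θ),
      Real.exp (-u) * ((1 + Real.tan θ ^ 2) *
        ((1 + Real.tan θ ^ 2) * (-θ / Real.tan θ - u / 2) * Real.cos (u * Real.tan θ)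
          + (-2 * θ / Real.tan θ) - u
          - Real.sin (2 * θ + u * Real.tan θ) / Real.sin (2 * θ)
          + 2 * (1 + Real.sin (θ + u * Real.tan θ) / Real.sin θ))))
      = 2 * Real.tan θ ^ 2 + 3 - 3 * θ * Real.tan θ - 3 * θ * (Real.cos θ / Real.sin θ) := by
  have hsin : 0 < sin θ := sin_pos_of_pos_of_lt_pi (by linarith [pi_pos, hθ.1]) hθ.2
  have hcos : cos θ < 0 := cos_neg_of_pi_div_two_lt_of_lt hθ.1 (by linarith [pi_pos, hθ.2])
  have htan : tan θ < 0 := by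
    rw [tan_eq_sin_div_cos]
    exact div_neg_of_pos_of_neg hsin hcos
  exact integral_exp_neg_mul_heathBrownSmoothing htan.ne
end

section
/- For real x > 0 and y ≠ 0, Re(Γ'/Γ)(x/2 + iy/2) = (1/2)log(x²/4 + y²/4) − x/(x²+y²) + Re ∫₀^∞ (u − ⌊u⌋ − 1/2)/(u + (x+iy)/2)² du, and the integral term satisfies |∫₀^∞ (u − ⌊u⌋ − 1/2)/(u + (x+iy)/2)² du| ≤ (1/|y|)·arctan(|y|/x). -/
/-!
With `P u = u - ⌊u⌋ - 1/2`, on `[k, k+1)` one has `P u = u - k - 1/2`, so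
`∫_k^{k+1} P u / (u + s)^2 du = log (s+k+1) - log (s+k) - ((s+k+1)⁻¹ + (s+k)⁻¹) / 2`.
Summing over `k < n` and using `ψ (s+1) = ψ s + s⁻¹` gives
`ψ s = (ψ (s+n) - log (s+n)) + log s - s⁻¹/2 + (s+n)⁻¹/2 + ∫_0^n P u / (u + s)^2 du`,
so `ψ s = log s - s⁻¹/2 + ∫_0^∞ P u / (u + s)^2 du` as soon as `ψ (s+n) - log (s+n) → 0`.
For real `t` the convexity of `log Γ` squeezes `ψ t` between `log (t-1)` and `log t`; both
sides are holomorphic on `0 < re s`, so the identity theorem extends the formula there.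
Its real part at `s = (x + iy)/2` is the claimed identity, and `|P| ≤ 1/2` bounds the integral
by `(1/2) ∫_0^∞ du / ((u + x/2)^2 + y^2/4) = arctan (|y|/x) / |y|`.
-/

open MeasureTheory Set Filter Topology

noncomputable section

def sawtooth (u : ℝ) : ℝ := u - ⌊u⌋ - 1 / 2

def stirlingIntegrand (s : ℂ) (u : ℝ) : ℂ := (sawtooth u : ℂ) / ((u : ℂ) + s) ^ 2

def stirlingRemainder (s : ℂ) : ℂ := ∫ u in Ioi (0 : ℝ), stirlingIntegrand s u

end

lemma abs_sawtooth_le (u : ℝ) : |sawtooth u| ≤ 1 / 2 := by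
  rw [abs_le, sawtooth]
  constructor <;> linarith [Int.floor_le u, Int.lt_floor_add_one u]

lemma sawtooth_eq_of_mem_Ico {k : ℤ} {u : ℝ} (hu : u ∈ Ico (k : ℝ) (k + 1)) :
    sawtooth u = u - k - 1 / 2 := by
  rw [sawtooth, Int.floor_eq_iff.mpr hu]

lemma measurable_sawtooth : Measurable sawtooth := by
  unfold sawtooth
  fun_prop

lemma measurable_stirlingIntegrand (s : ℂ) : Measurable (stirlingIntegrand s) :=
  (Complex.measurable_ofReal.comp measurable_sawtooth).div (by fun_prop)

lemma add_re_le_norm_ofReal_add (z : ℂ) (u : ℝ) : u + z.re ≤ ‖(u : ℂ) + z‖ := by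
  simpa using Complex.re_le_norm ((u : ℂ) + z)

lemma sq_norm_ofReal_add (z : ℂ) (u : ℝ) :
    ‖(u : ℂ) + z‖ ^ 2 = (u + z.re) ^ 2 + z.im ^ 2 := by
  rw [Complex.sq_norm, Complex.normSq_apply]
  simp [sq]

lemma sq_add_sq_le_two_mul_sq_norm_ofReal_add {z : ℂ} {c u : ℝ} (hc : 0 ≤ c)
    (hcz : c ≤ z.re) (hu : 0 ≤ u) : (u + c) ^ 2 + c ^ 2 ≤ 2 * ‖(u : ℂ) + z‖ ^ 2 := by
  nlinarith [add_re_le_norm_ofReal_add z u]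

lemma ofReal_add_mem_slitPlane {z : ℂ} (hz : 0 < z.re) {u : ℝ} (hu : 0 ≤ u) :
    (u : ℂ) + z ∈ Complex.slitPlane :=
  Complex.mem_slitPlane_iff.mpr (.inl (by rw [Complex.add_re, Complex.ofReal_re]; linarith))

lemma norm_stirlingIntegrand_le (s : ℂ) (u : ℝ) :
    ‖stirlingIntegrand s u‖ ≤ 1 / 2 / ‖(u : ℂ) + s‖ ^ 2 := by
  rw [stirlingIntegrand, norm_div, norm_pow, Complex.norm_real, Real.norm_eq_abs]
  gcongr
  exact abs_sawtooth_le u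

lemma hasDerivAt_inv_mul_arctan (a : ℝ) {b : ℝ} (hb : b ≠ 0) (u : ℝ) :
    HasDerivAt (fun u => b⁻¹ * Real.arctan ((u + a) / b)) ((u + a) ^ 2 + b ^ 2)⁻¹ u := by
  have h := (((hasDerivAt_id' u).add_const a).div_const b).arctan.const_mul b⁻¹
  refine h.congr_deriv ?_
  field_simp
  ring

lemma tendsto_inv_mul_arctan_atTop (a : ℝ) {b : ℝ} (hb : 0 < b) :
    Tendsto (fun u => b⁻¹ * Real.arctan ((u + a) / b)) atTop (𝓝 (b⁻¹ * (Real.pi / 2))) :=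
  ((Real.tendsto_arctan_atTop.mono_right nhdsWithin_le_nhds).comp
    ((tendsto_atTop_add_const_right _ a tendsto_id).atTop_div_const hb)).const_mul _

lemma integrableOn_Ioi_inv_sq_add_sq (a : ℝ) {b : ℝ} (hb : 0 < b) :
    IntegrableOn (fun u : ℝ => ((u + a) ^ 2 + b ^ 2)⁻¹) (Ioi 0) :=
  integrableOn_Ioi_deriv_of_nonneg' (fun u _ => hasDerivAt_inv_mul_arctan a hb.ne' u)
    (fun _ _ => by positivity) (tendsto_inv_mul_arctan_atTop a hb)

lemma integral_Ioi_inv_sq_add_sq {a b : ℝ} (ha : 0 < a) (hb : 0 < b) :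
    ∫ u in Ioi (0 : ℝ), ((u + a) ^ 2 + b ^ 2)⁻¹ = b⁻¹ * Real.arctan (b / a) := by
  rw [integral_Ioi_of_hasDerivAt_of_nonneg' (fun u _ => hasDerivAt_inv_mul_arctan a hb.ne' u)
    (fun _ _ => by positivity) (tendsto_inv_mul_arctan_atTop a hb), zero_add, ← inv_div b a,
    Real.arctan_inv_of_pos (div_pos hb ha)]
  ring

lemma integrableOn_stirlingIntegrand {s : ℂ} (hs : 0 < s.re) :
    IntegrableOn (stirlingIntegrand s) (Ioi 0) := by
  refine Integrable.mono' (integrableOn_Ioi_inv_sq_add_sq s.re hs)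
    (measurable_stirlingIntegrand s).aestronglyMeasurable ?_
  filter_upwards [ae_restrict_mem measurableSet_Ioi] with u (hu : 0 < u)
  calc ‖stirlingIntegrand s u‖
      ≤ 1 / 2 / ‖(u : ℂ) + s‖ ^ 2 := norm_stirlingIntegrand_le s u
    _ ≤ ((u + s.re) ^ 2 + s.re ^ 2)⁻¹ := by
      rw [div_div, one_div]
      exact inv_anti₀ (by positivity)
        (sq_add_sq_le_two_mul_sq_norm_ofReal_add hs.le le_rfl hu.le)

lemma intervalIntegrable_stirlingIntegrand {s : ℂ} (hs : 0 < s.re) {a b : ℝ} (ha : 0 ≤ a)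
    (hab : a ≤ b) : IntervalIntegrable (stirlingIntegrand s) volume a b :=
  (intervalIntegrable_iff_integrableOn_Ioc_of_le hab).2
    ((integrableOn_stirlingIntegrand hs).mono_set fun _ hu => ha.trans_lt hu.1)

lemma norm_stirlingRemainder_le {s : ℂ} (hs : 0 < s.re) (him : s.im ≠ 0) :
    ‖stirlingRemainder s‖ ≤ 1 / 2 * |s.im|⁻¹ * Real.arctan (|s.im| / s.re) := by
  have hb : 0 < |s.im| := abs_pos.mpr him
  calc ‖stirlingRemainder s‖
      ≤ ∫ u in Ioi (0 : ℝ), 1 / 2 * ((u + s.re) ^ 2 + |s.im| ^ 2)⁻¹ :=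
        norm_integral_le_of_norm_le ((integrableOn_Ioi_inv_sq_add_sq s.re hb).const_mul _)
          (Eventually.of_forall fun u => by
            simpa [sq_abs, sq_norm_ofReal_add, div_eq_mul_inv] using
              norm_stirlingIntegrand_le s u)
    _ = _ := by rw [integral_const_mul, integral_Ioi_inv_sq_add_sq hs hb]; ring

lemma hasDerivAt_log_sub_div {s : ℂ} (c : ℝ) {u : ℝ}
    (hu : (u : ℂ) + s ∈ Complex.slitPlane) :
    HasDerivAt (fun t : ℝ => Complex.log ((t : ℂ) + s) - ((t : ℂ) - c) / ((t : ℂ) + s))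
      (((u : ℂ) - c) / ((u : ℂ) + s) ^ 2) u := by
  have hid : HasDerivAt (fun t : ℝ => (t : ℂ)) 1 u := by
    simpa using (hasDerivAt_id' u).ofReal_comp
  have hlin := hid.add_const s
  have h := (hlin.clog_real hu).fun_sub
    ((hid.sub_const (c : ℂ)).fun_div hlin (Complex.slitPlane_ne_zero hu))
  refine h.congr_deriv ?_
  field_simp [Complex.slitPlane_ne_zero hu]
  ring

lemma intervalIntegral_stirlingIntegrand_nat {s : ℂ} (hs : 0 < s.re) (k : ℕ) :
    ∫ u in (k : ℝ)..(k + 1), stirlingIntegrand s u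
      = Complex.log (s + (k + 1)) - Complex.log (s + k)
        - 1 / 2 * ((s + (k + 1))⁻¹ + (s + k)⁻¹) := by
  set c : ℝ := k + 1 / 2
  have hF : ∀ u ∈ Ici (k : ℝ), HasDerivAt
      (fun t : ℝ => Complex.log ((t : ℂ) + s) - ((t : ℂ) - c) / ((t : ℂ) + s))
      (((u : ℂ) - c) / ((u : ℂ) + s) ^ 2) u :=
    fun u hu => hasDerivAt_log_sub_div _ (ofReal_add_mem_slitPlane hs (k.cast_nonneg.trans hu))
  rw [intervalIntegral.integral_eq_sub_of_hasDerivAt_of_le (by linarith)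
    (fun u hu => (hF u hu.1).continuousAt.continuousWithinAt)
    (fun u hu => (hF u hu.1.le).congr_deriv ?_)
    (intervalIntegrable_stirlingIntegrand hs k.cast_nonneg (by linarith))]
  · push_cast [c]
    ring_nf
  · rw [stirlingIntegrand,
      sawtooth_eq_of_mem_Ico (k := k) (by push_cast; exact ⟨hu.1.le, hu.2⟩)]
    push_cast [c]
    ring

lemma sum_range_inv_add_eq {s : ℂ} (hs : 0 < s.re) (n : ℕ) :
    ∑ k ∈ Finset.range n, (s + k)⁻¹ = Complex.log (s + n) - Complex.log s + 1 / 2 * s⁻¹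
      - 1 / 2 * (s + n)⁻¹ - ∫ u in (0 : ℝ)..n, stirlingIntegrand s u := by
  induction n with
  | zero => simp
  | succ n ih =>
    rw [Finset.sum_range_succ, ih, Nat.cast_succ, Nat.cast_succ,
      ← intervalIntegral.integral_add_adjacent_intervals (b := n) (c := n + 1)
        (intervalIntegrable_stirlingIntegrand hs le_rfl n.cast_nonneg)
        (intervalIntegrable_stirlingIntegrand hs n.cast_nonneg (by linarith)),
      intervalIntegral_stirlingIntegrand_nat hs n]
    ring

lemma ne_neg_natCast_of_re_pos {s : ℂ} (hs : 0 < s.re) (m : ℕ) : s ≠ -m := by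
  rintro rfl
  rw [Complex.neg_re, Complex.natCast_re] at hs
  linarith [(m.cast_nonneg : (0 : ℝ) ≤ m)]

lemma Complex.digamma_add_nat {s : ℂ} (hs : ∀ m : ℕ, s ≠ -m) (n : ℕ) :
    Complex.digamma (s + n) = Complex.digamma s + ∑ k ∈ Finset.range n, (s + k)⁻¹ := by
  induction n with
  | zero => simp
  | succ n ih =>
    have hsn : ∀ m : ℕ, s + n ≠ -m := fun m h =>
      hs (m + n) (by push_cast; linear_combination h)
    rw [Nat.cast_succ, ← add_assoc, Complex.digamma_apply_add_one _ hsn, ih,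
      Finset.sum_range_succ, add_assoc]

lemma tendsto_inv_add_natCast_atTop (s : ℂ) :
    Tendsto (fun n : ℕ => (s + n)⁻¹) atTop (𝓝 0) :=
  tendsto_inv₀_cobounded.comp
    ((tendsto_const_add_cobounded s).comp tendsto_natCast_atTop_cobounded)

lemma Complex.digamma_eq_of_tendsto_digamma_sub_log {s : ℂ} (hs : 0 < s.re)
    (h : Tendsto (fun n : ℕ => Complex.digamma (s + n) - Complex.log (s + n)) atTop (𝓝 0)) :
    Complex.digamma s = Complex.log s - 1 / 2 * s⁻¹ + stirlingRemainder s := by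
  have hdecomp : ∀ n : ℕ, (Complex.digamma (s + n) - Complex.log (s + n))
      + (Complex.log s - 1 / 2 * s⁻¹) + 1 / 2 * (s + n)⁻¹
      + ∫ u in (0 : ℝ)..n, stirlingIntegrand s u = Complex.digamma s := fun n => by
    rw [Complex.digamma_add_nat (ne_neg_natCast_of_re_pos hs) n, sum_range_inv_add_eq hs n]
    ring
  have hlim := (((h.add_const (Complex.log s - 1 / 2 * s⁻¹)).add
    ((tendsto_inv_add_natCast_atTop s).const_mul (1 / 2))).add
    (intervalIntegral_tendsto_integral_Ioi 0 (integrableOn_stirlingIntegrand hs)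
      tendsto_natCast_atTop_atTop))
  simp only [hdecomp, zero_add, mul_zero, add_zero] at hlim
  exact tendsto_nhds_unique tendsto_const_nhds hlim

namespace Real

lemma differentiableAt_log_Gamma {t : ℝ} (ht : 0 < t) : DifferentiableAt ℝ (log ∘ Gamma) t :=
  (differentiableAt_Gamma fun m => by linarith [(m.cast_nonneg : (0 : ℝ) ≤ m)]).log
    (Gamma_pos_of_pos ht).ne'

lemma log_Gamma_add_one {t : ℝ} (ht : 0 < t) :
    (log ∘ Gamma) (t + 1) = (log ∘ Gamma) t + log t := by
  simp only [Function.comp_apply, Gamma_add_one ht.ne',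
    log_mul ht.ne' (Gamma_pos_of_pos ht).ne', add_comm]

lemma log_sub_one_le_deriv_log_Gamma {t : ℝ} (ht : 1 < t) :
    log (t - 1) ≤ deriv (log ∘ Gamma) t := by
  have hrec := log_Gamma_add_one (t := t - 1) (by linarith)
  rw [sub_add_cancel] at hrec
  have h := convexOn_log_Gamma.slope_le_deriv (x := t - 1) (y := t) (mem_Ioi.mpr (by linarith))
    (mem_Ioi.mpr (by linarith)) (by linarith) (differentiableAt_log_Gamma (by linarith))
  rwa [slope_def_field, sub_sub_cancel, div_one, hrec, add_sub_cancel_left] at h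

lemma deriv_log_Gamma_le_log {t : ℝ} (ht : 0 < t) : deriv (log ∘ Gamma) t ≤ log t := by
  have h := convexOn_log_Gamma.deriv_le_slope (x := t) (y := t + 1) ht
    (mem_Ioi.mpr (by linarith)) (by linarith) (differentiableAt_log_Gamma ht)
  rwa [slope_def_field, add_sub_cancel_left, div_one, log_Gamma_add_one ht,
    add_sub_cancel_left] at h

lemma tendsto_deriv_log_Gamma_sub_log :
    Tendsto (fun t => deriv (log ∘ Gamma) t - log t) atTop (𝓝 0) := by
  refine tendsto_of_tendsto_of_tendsto_of_le_of_le' (tendsto_log_comp_add_sub_log (-1))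
    tendsto_const_nhds ?_ ?_
  · filter_upwards [eventually_gt_atTop 1] with t ht
    rw [← sub_eq_add_neg]
    linarith [log_sub_one_le_deriv_log_Gamma ht]
  · filter_upwards [eventually_gt_atTop 0] with t ht
    linarith [deriv_log_Gamma_le_log ht]

end Real

lemma Complex.digamma_ofReal {t : ℝ} (ht : 0 < t) :
    Complex.digamma t = (deriv (Real.log ∘ Real.Gamma) t : ℝ) := by
  have hΓ : DifferentiableAt ℝ Real.Gamma t :=
    Real.differentiableAt_Gamma fun m => by linarith [(m.cast_nonneg : (0 : ℝ) ≤ m)]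
  have hC := (Complex.differentiableAt_Gamma _
    (ne_neg_natCast_of_re_pos (by simpa using ht))).hasDerivAt.comp_ofReal
  simp only [Complex.Gamma_ofReal] at hC
  rw [Complex.digamma_def, logDeriv_apply, hC.unique hΓ.hasDerivAt.ofReal_comp,
    Complex.Gamma_ofReal, Function.comp_def, deriv.log hΓ (Real.Gamma_pos_of_pos ht).ne']
  push_cast
  rfl

lemma Complex.tendsto_digamma_ofReal_add_natCast_sub_log {x : ℝ} (hx : 0 < x) :
    Tendsto (fun n : ℕ => Complex.digamma (x + n) - Complex.log (x + n)) atTop (𝓝 0) := by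
  have h := (Complex.continuous_ofReal.tendsto 0).comp
    (Real.tendsto_deriv_log_Gamma_sub_log.comp
      (tendsto_atTop_add_const_left _ x tendsto_natCast_atTop_atTop))
  refine (h.congr fun n => ?_).trans (by simp)
  have hxn : 0 < x + n := by positivity
  have hcast : (x : ℂ) + n = ((x + n : ℝ) : ℂ) := by push_cast; rfl
  rw [hcast, Complex.digamma_ofReal hxn, ← Complex.ofReal_log hxn.le]
  simp

lemma re_sub_lt_of_mem_ball {z s : ℂ} {r : ℝ} (hz : z ∈ Metric.ball s r) :
    s.re - r < z.re := by
  have h := (Complex.abs_re_le_norm (z - s)).trans_lt (mem_ball_iff_norm.mp hz)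
  rw [Complex.sub_re, abs_lt] at h
  linarith

lemma hasDerivAt_stirlingIntegrand {z : ℂ} {u : ℝ} (hz : (u : ℂ) + z ≠ 0) :
    HasDerivAt (fun z => stirlingIntegrand z u)
      (-2 * (sawtooth u : ℂ) / ((u : ℂ) + z) ^ 3) z := by
  have h := (((hasDerivAt_id' z).const_add (u : ℂ)).fun_pow 2).fun_inv (pow_ne_zero 2 hz)
  refine (h.const_mul (sawtooth u : ℂ)).congr_deriv ?_
  field_simp
  ring

lemma norm_deriv_stirlingIntegrand_le {z : ℂ} {c u : ℝ} (hc : 0 < c) (hcz : c ≤ z.re)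
    (hu : 0 ≤ u) :
    ‖-2 * (sawtooth u : ℂ) / ((u : ℂ) + z) ^ 3‖ ≤ 2 / c * ((u + c) ^ 2 + c ^ 2)⁻¹ := by
  set N := ‖(u : ℂ) + z‖
  have hcN : c ≤ N := by linarith [add_re_le_norm_ofReal_add z u]
  have hQ := sq_add_sq_le_two_mul_sq_norm_ofReal_add hc.le hcz hu
  calc ‖-2 * (sawtooth u : ℂ) / ((u : ℂ) + z) ^ 3‖ = 2 * |sawtooth u| / N ^ 3 := by
        simp [N]
    _ ≤ 2 * (1 / 2) / N ^ 3 := by gcongr; exact abs_sawtooth_le u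
    _ = 2 / (2 * N ^ 3) := by ring
    _ ≤ 2 / (c * ((u + c) ^ 2 + c ^ 2)) := by
      refine div_le_div_of_nonneg_left zero_le_two (by positivity) ?_
      calc c * ((u + c) ^ 2 + c ^ 2) ≤ N * (2 * N ^ 2) := by gcongr
        _ = 2 * N ^ 3 := by ring
    _ = 2 / c * ((u + c) ^ 2 + c ^ 2)⁻¹ := by rw [div_mul_eq_div_div, div_eq_mul_inv]

lemma differentiableAt_stirlingRemainder {s : ℂ} (hs : 0 < s.re) :
    DifferentiableAt ℂ stirlingRemainder s := by
  have hc : 0 < s.re / 2 := by positivity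
  have hball : ∀ z ∈ Metric.ball s (s.re / 2), s.re / 2 ≤ z.re := fun z hz => by
    linarith [re_sub_lt_of_mem_ball hz]
  refine (hasDerivAt_integral_of_dominated_loc_of_deriv_le (μ := volume.restrict (Ioi 0))
    (F' := fun z u => -2 * (sawtooth u : ℂ) / ((u : ℂ) + z) ^ 3)
    (Metric.ball_mem_nhds s hc)
    (.of_forall fun z => (measurable_stirlingIntegrand z).aestronglyMeasurable)
    (integrableOn_stirlingIntegrand hs)
    ((measurable_const.mul (Complex.measurable_ofReal.comp measurable_sawtooth)).div
      (by fun_prop)).aestronglyMeasurable ?_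
    ((integrableOn_Ioi_inv_sq_add_sq (s.re / 2) hc).const_mul (2 / (s.re / 2)))
    ?_).2.differentiableAt
  · filter_upwards [ae_restrict_mem measurableSet_Ioi] with u (hu : 0 < u) z hz
    exact norm_deriv_stirlingIntegrand_le hc (hball z hz) hu.le
  · filter_upwards [ae_restrict_mem measurableSet_Ioi] with u (hu : 0 < u) z hz
    exact hasDerivAt_stirlingIntegrand (Complex.slitPlane_ne_zero
      (ofReal_add_mem_slitPlane (hc.trans_le (hball z hz)) hu.le))

lemma Complex.analyticOnNhd_digamma_re_pos :
    AnalyticOnNhd ℂ Complex.digamma {s | 0 < s.re} := by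
  have hΓ : AnalyticOnNhd ℂ Complex.Gamma {s | 0 < s.re} :=
    DifferentiableOn.analyticOnNhd (fun s hs => (Complex.differentiableAt_Gamma s
      (ne_neg_natCast_of_re_pos hs)).differentiableWithinAt)
      (isOpen_lt continuous_const Complex.continuous_re)
  exact hΓ.deriv.div hΓ fun s hs => Complex.Gamma_ne_zero (ne_neg_natCast_of_re_pos hs)

lemma analyticOnNhd_log_sub_add_stirlingRemainder :
    AnalyticOnNhd ℂ (fun s => Complex.log s - 1 / 2 * s⁻¹ + stirlingRemainder s)
      {s | 0 < s.re} := by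
  refine DifferentiableOn.analyticOnNhd (fun s (hs : 0 < s.re) => ?_)
    (isOpen_lt continuous_const Complex.continuous_re)
  have hslit : s ∈ Complex.slitPlane := Complex.mem_slitPlane_iff.mpr (.inl hs)
  exact (((Complex.differentiableAt_log hslit).sub
    ((differentiableAt_inv (Complex.slitPlane_ne_zero hslit)).const_mul _)).add
    (differentiableAt_stirlingRemainder hs)).differentiableWithinAt

lemma frequently_ofReal_pos_nhdsNE_one :
    ∃ᶠ z in 𝓝[≠] (1 : ℂ), ∃ t : ℝ, 0 < t ∧ (t : ℂ) = z := by
  have hmap : Tendsto (fun t : ℝ => (t : ℂ)) (𝓝[≠] 1) (𝓝[≠] 1) :=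
    tendsto_nhdsWithin_of_tendsto_nhds_of_eventually_within _
      (by simpa using (Complex.continuous_ofReal.tendsto 1).mono_left nhdsWithin_le_nhds)
      (eventually_nhdsWithin_of_forall fun t ht => by simpa using ht)
  refine hmap.frequently (Eventually.frequently ?_)
  filter_upwards [nhdsWithin_le_nhds (eventually_gt_nhds one_pos)] with t ht using ⟨t, ht, rfl⟩

theorem Complex.digamma_eq_log_sub_add_stirlingRemainder {s : ℂ} (hs : 0 < s.re) :
    Complex.digamma s = Complex.log s - 1 / 2 * s⁻¹ + stirlingRemainder s := by
  refine Complex.analyticOnNhd_digamma_re_pos.eqOn_of_preconnected_of_frequently_eq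
    analyticOnNhd_log_sub_add_stirlingRemainder (convex_halfSpace_re_gt 0).isPreconnected
    (by simp) (frequently_ofReal_pos_nhdsNE_one.mono ?_) hs
  rintro _ ⟨t, ht, rfl⟩
  exact Complex.digamma_eq_of_tendsto_digamma_sub_log (by simpa using ht)
    (Complex.tendsto_digamma_ofReal_add_natCast_sub_log ht)

theorem stmt_13 (x y : ℝ) (hx : 0 < x) (hy : y ≠ 0) :
    ((deriv Complex.Gamma ((x : ℂ) / 2 + (y : ℂ) / 2 * Complex.I))
        / Complex.Gamma ((x : ℂ) / 2 + (y : ℂ) / 2 * Complex.I)).re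
      = (1 / 2) * Real.log (x ^ 2 / 4 + y ^ 2 / 4) - x / (x ^ 2 + y ^ 2)
        + (∫ u in Set.Ioi (0 : ℝ),
            ((u - (⌊u⌋ : ℝ) - 1 / 2 : ℝ) : ℂ)
              / ((u : ℂ) + ((x : ℂ) + (y : ℂ) * Complex.I) / 2) ^ 2).re ∧
    ‖(∫ u in Set.Ioi (0 : ℝ),
        ((u - (⌊u⌋ : ℝ) - 1 / 2 : ℝ) : ℂ)
          / ((u : ℂ) + ((x : ℂ) + (y : ℂ) * Complex.I) / 2) ^ 2)‖
      ≤ (1 / |y|) * Real.arctan (|y| / x) := by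
  set s : ℂ := (x : ℂ) / 2 + (y : ℂ) / 2 * Complex.I
  have hre : s.re = x / 2 := by simp [s]
  have him : s.im = y / 2 := by simp [s]
  have hs : 0 < s.re := by rw [hre]; positivity
  rw [show ((x : ℂ) + (y : ℂ) * Complex.I) / 2 = s by ring]
  change (Complex.digamma s).re = _ + (stirlingRemainder s).re ∧ ‖stirlingRemainder s‖ ≤ _
  constructor
  · have hnorm : ‖s‖ = Real.sqrt (x ^ 2 / 4 + y ^ 2 / 4) := by
      rw [Complex.norm_def, Complex.normSq_apply, hre, him]
      ring_nf
    rw [Complex.digamma_eq_log_sub_add_stirlingRemainder hs, Complex.add_re, Complex.sub_re,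
      Complex.log_re, hnorm, Real.log_sqrt (by positivity)]
    simp only [one_div, Complex.mul_re, Complex.inv_re, Complex.inv_im, Complex.re_ofNat,
      Complex.im_ofNat, Complex.normSq_ofNat, Complex.normSq_apply, hre, him, div_self_mul_self',
      neg_zero, zero_div, zero_mul, sub_zero, add_left_inj]
    field_simp
  · refine (norm_stirlingRemainder_le hs (by rw [him]; positivity)).trans_eq ?_
    rw [hre, him, abs_div, abs_two]
    field_simp
end
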